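/- arXiv:2502.19855 — 6 statements merged into one kernel-verified Lean document; each statement's English description precedes it below -/
import Mathlib

section
/- Let T be an A-bounded operator and q ∈ D. If λ ∈ ℂ is an A-eigenvalue of T, i.e. there exists a nonzero x in the closure of the range of A with ATx = λAx, then qλ ∈ W_{q,A}(T). -/
/-!
Normalise the eigenvector: `x ≠ 0` lies in the closure of the range of `A`, which is orthogonal
to `ker A`, so `A x ≠ 0` and hence `‖x‖_A > 0` (Cauchy–Schwarz for `⟨·,·⟩_A`). As `A` has rank at
least two, Gram–Schmidt for `⟨·,·⟩_A` gives `z` with `‖z‖_A = 1` and `⟨x, z⟩_A = 0`, and then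
`y = q̄ x + √(1 - |q|²) z` has `‖y‖_A = 1` and `⟨x, y⟩_A = q`. Finally
`⟨T x, y⟩_A = ⟨A T x, y⟩ = λ ⟨x, y⟩_A = q λ`.
-/

noncomputable section

open Filter

variable {H : Type*} [NormedAddCommGroup H] [InnerProductSpace ℂ H] [CompleteSpace H]

/-- The paper's semi-inner product `⟨x, y⟩_A = ⟨A x, y⟩`, where the inner product of the
paper is linear in the *first* argument; in Mathlib's convention this is `⟪y, A x⟫_ℂ`. -/
def sipA (A : H →L[ℂ] H) (x y : H) : ℂ := inner ℂ y (A x)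

/-- The `A`-seminorm `‖x‖_A = ⟨A x, x⟩ ^ (1/2)`. -/
def semiNormA (A : H →L[ℂ] H) (x : H) : ℝ := Real.sqrt (sipA A x x).re

/-- The `A`-`q`-numerical range `W_{q,A}(T)`. -/
def WqA (A : H →L[ℂ] H) (q : ℂ) (T : H →L[ℂ] H) : Set ℂ :=
  {z | ∃ x y : H, semiNormA A x = 1 ∧ semiNormA A y = 1 ∧ sipA A x y = q ∧ z = sipA A (T x) y}

/-- The `A`-`q`-numerical radius `w_{q,A}(T)`. -/
def wqA (A : H →L[ℂ] H) (q : ℂ) (T : H →L[ℂ] H) : ℝ := sSup ((fun z : ℂ => ‖z‖) '' WqA A q T)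

/-- The `A`-operator seminorm `‖T‖_A = sup {‖T x‖_A : ‖x‖_A ≤ 1}`. -/
def opNormA (A T : H →L[ℂ] H) : ℝ :=
  sSup ((fun x => semiNormA A (T x)) '' {x : H | semiNormA A x ≤ 1})

/-- `T` is `A`-bounded: `‖T x‖_A ≤ c ‖x‖_A` for some `c > 0`. -/
def ABounded (A T : H →L[ℂ] H) : Prop := ∃ c > 0, ∀ x : H, semiNormA A (T x) ≤ c * semiNormA A x

theorem Submodule.exists_mem_notMem_span_singleton {K V : Type*} [DivisionRing K]
    [AddCommGroup V] [Module K V] {S : Submodule K V} (hS : 2 ≤ Module.rank K S) (v : V) :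
    ∃ w ∈ S, w ∉ K ∙ v := by
  by_contra! h
  have hle : Module.rank K S ≤ 1 :=
    (Submodule.rank_mono h).trans ((rank_span_le _).trans (by simp))
  exact absurd (hS.trans hle) (by norm_num)

theorem LinearMap.IsSymmetric.apply_ne_zero_of_mem_closure_range {𝕜 E : Type*} [RCLike 𝕜]
    [NormedAddCommGroup E] [InnerProductSpace 𝕜 E] {T : E →ₗ[𝕜] E} (hT : T.IsSymmetric) {x : E}
    (hx : x ∈ closure (LinearMap.range T : Set E)) (hx0 : x ≠ 0) : T x ≠ 0 := by
  intro hTx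
  set K := LinearMap.range T
  have hxK : x ∈ Kᗮ := by rwa [hT.orthogonal_range]
  have hxK' : x ∈ Kᗮᗮ := closure_minimal K.le_orthogonal_orthogonal Kᗮ.isClosed_orthogonal hx
  exact hx0 (Submodule.disjoint_def.mp Kᗮ.orthogonal_disjoint x hxK hxK')

open ComplexConjugate

section SemiInner

variable {E : Type*} [NormedAddCommGroup E] [InnerProductSpace ℂ E] {A : E →L[ℂ] E}

@[simp] lemma sipA_smul_left (c : ℂ) (x y : E) : sipA A (c • x) y = c * sipA A x y := by
  simp [sipA]

@[simp] lemma sipA_smul_right (c : ℂ) (x y : E) : sipA A x (c • y) = conj c * sipA A x y := by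
  simp [sipA, mul_comm]

@[simp] lemma sipA_add_left (x x' y : E) : sipA A (x + x') y = sipA A x y + sipA A x' y := by
  simp [sipA]

@[simp] lemma sipA_add_right (x y y' : E) : sipA A x (y + y') = sipA A x y + sipA A x y' := by
  simp [sipA]

@[simp] lemma sipA_sub_left (x x' y : E) : sipA A (x - x') y = sipA A x y - sipA A x' y := by
  simp [sipA]

lemma conj_sipA (hA : (A : E →ₗ[ℂ] E).IsSymmetric) (x y : E) :
    conj (sipA A x y) = sipA A y x := by
  rw [sipA, sipA, inner_conj_symm]
  exact hA x y

lemma sipA_self_eq_re (hA : (A : E →ₗ[ℂ] E).IsSymmetric) (x : E) :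
    sipA A x x = (sipA A x x).re :=
  (Complex.conj_eq_iff_re.mp (conj_sipA hA x x)).symm

lemma semiNormA_eq_one_of_sipA_self {x : E} (h : sipA A x x = 1) : semiNormA A x = 1 := by
  simp [semiNormA, h]

lemma sipA_apply_of_apply_eq_smul {T : E →L[ℂ] E} {lam : ℂ} {x : E}
    (h : A (T x) = lam • A x) (y : E) : sipA A (T x) y = lam * sipA A x y := by
  rw [sipA, h, inner_smul_right, sipA]

lemma ContinuousLinearMap.IsPositive.norm_sipA_sq_le (hA : A.IsPositive) (x y : E) :
    ‖sipA A x y‖ ^ 2 ≤ (sipA A x x).re * (sipA A y y).re := by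
  let core : PreInnerProductSpace.Core ℂ E :=
    { inner u v := inner ℂ u (A v)
      conj_inner_symm u v := by
        rw [inner_conj_symm]
        exact hA.isSymmetric u v
      re_inner_nonneg := hA.re_inner_nonneg_right
      add_left _ _ _ := inner_add_left _ _ _
      smul_left _ _ _ := inner_smul_left _ _ _ }
  have h := @InnerProductSpace.Core.inner_mul_inner_self_le ℂ E _ _ _ core y x
  change ‖sipA A x y‖ * ‖sipA A y x‖ ≤ (sipA A y y).re * (sipA A x x).re at h
  rwa [← conj_sipA hA.isSymmetric x y, RCLike.norm_conj, ← sq, mul_comm] at h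

lemma ContinuousLinearMap.IsPositive.re_sipA_self_pos_iff (hA : A.IsPositive) (x : E) :
    0 < (sipA A x x).re ↔ A x ≠ 0 := by
  refine ⟨fun h hx ↦ by simp [sipA, hx] at h, fun hx ↦ (hA.re_inner_nonneg_right x).lt_of_ne' ?_⟩
  intro h0
  have hCS := hA.norm_sipA_sq_le x (A x)
  rw [show (sipA A x x).re = 0 from h0, zero_mul] at hCS
  have : inner ℂ (A x) (A x) = 0 := by
    simpa [sipA] using hCS
  exact hx (inner_self_eq_zero.mp this)

lemma exists_sipA_self_smul_eq_one (hA : A.IsPositive) {x : E} (hx : A x ≠ 0) :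
    ∃ r : ℝ, sipA A ((r : ℂ) • x) ((r : ℂ) • x) = 1 := by
  have hpos := (hA.re_sipA_self_pos_iff x).mpr hx
  refine ⟨(√(sipA A x x).re)⁻¹, ?_⟩
  rw [sipA_smul_left, sipA_smul_right, Complex.conj_ofReal, sipA_self_eq_re hA.isSymmetric x]
  norm_cast
  rw [← mul_assoc, ← mul_inv, Real.mul_self_sqrt hpos.le, inv_mul_cancel₀ hpos.ne']

lemma exists_sipA_self_eq_one_sipA_eq_zero (hA : A.IsPositive)
    (hrank : 2 ≤ Module.rank ℂ (LinearMap.range A.toLinearMap)) {x : E}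
    (hx : sipA A x x = 1) : ∃ z, sipA A z z = 1 ∧ sipA A x z = 0 := by
  obtain ⟨_, ⟨u, rfl⟩, hu⟩ := Submodule.exists_mem_notMem_span_singleton hrank (A x)
  set c := sipA A u x
  set w := u - c • x
  have hxw : sipA A x w = 0 := by
    rw [← conj_sipA hA.isSymmetric, sipA_sub_left, sipA_smul_left, hx, mul_one, sub_self,
      map_zero]
  have hAw : A w ≠ 0 := by
    intro h
    refine hu (Submodule.mem_span_singleton.mpr ⟨c, ?_⟩)
    rw [map_sub, map_smul, sub_eq_zero] at h
    exact h.symm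
  obtain ⟨r, hr⟩ := exists_sipA_self_smul_eq_one hA hAw
  exact ⟨(r : ℂ) • w, hr, by rw [sipA_smul_right, hxw, mul_zero]⟩

lemma exists_sipA_self_eq_one_sipA_eq (hA : (A : E →ₗ[ℂ] E).IsSymmetric) {x z : E}
    (hx : sipA A x x = 1) (hz : sipA A z z = 1) (hxz : sipA A x z = 0) {q : ℂ} (hq : ‖q‖ ≤ 1) :
    ∃ y, sipA A y y = 1 ∧ sipA A x y = q := by
  have hzx : sipA A z x = 0 := by rw [← conj_sipA hA, hxz, map_zero]
  set s := √(1 - ‖q‖ ^ 2)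
  have hs : s ^ 2 = 1 - ‖q‖ ^ 2 := Real.sq_sqrt (by nlinarith [norm_nonneg q])
  refine ⟨conj q • x + (s : ℂ) • z, ?_, ?_⟩
  · simp only [sipA_add_left, sipA_add_right, sipA_smul_left, sipA_smul_right, hx, hz, hxz, hzx,
      Complex.conj_conj, Complex.conj_ofReal, mul_one, mul_zero, add_zero, zero_add,
      Complex.mul_conj, Complex.normSq_eq_norm_sq]
    exact_mod_cast (by linarith : ‖q‖ ^ 2 + s * s = 1)
  · simp only [sipA_add_right, sipA_smul_right, hx, hxz, Complex.conj_conj, mul_one, mul_zero,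
      add_zero]

end SemiInner

theorem stmt_1_general (A : H →L[ℂ] H) (hA : A.IsPositive)
    (hrank : 2 ≤ Module.rank ℂ (LinearMap.range A.toLinearMap))
    (T : H →L[ℂ] H)
    (q : ℂ) (hq : ‖q‖ ≤ 1)
    (lam : ℂ) (x : H) (hx0 : x ≠ 0)
    (hxR : x ∈ closure ((LinearMap.range A.toLinearMap : Submodule ℂ H) : Set H))
    (hEig : A (T x) = lam • A x) :
    q * lam ∈ WqA A q T := by
  obtain ⟨r, hx₁⟩ := exists_sipA_self_smul_eq_one hA
    (hA.isSymmetric.apply_ne_zero_of_mem_closure_range hxR hx0)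
  set x₁ := (r : ℂ) • x
  have hEig₁ : A (T x₁) = lam • A x₁ := by
    simp only [x₁, map_smul, hEig, smul_comm (r : ℂ) lam]
  obtain ⟨z, hz, hx₁z⟩ := exists_sipA_self_eq_one_sipA_eq_zero hA hrank hx₁
  obtain ⟨y, hy, hx₁y⟩ := exists_sipA_self_eq_one_sipA_eq hA.isSymmetric hx₁ hz hx₁z hq
  refine ⟨x₁, y, semiNormA_eq_one_of_sipA_self hx₁, semiNormA_eq_one_of_sipA_self hy, hx₁y, ?_⟩
  rw [sipA_apply_of_apply_eq_smul hEig₁, hx₁y, mul_comm]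

theorem stmt_1 (A : H →L[ℂ] H) (hA : A.IsPositive)
    (hrank : 2 ≤ Module.rank ℂ (LinearMap.range A.toLinearMap))
    (T : H →L[ℂ] H) (hT : ABounded A T)
    (q : ℂ) (hq : ‖q‖ ≤ 1)
    (lam : ℂ) (x : H) (hx0 : x ≠ 0)
    (hxR : x ∈ closure ((LinearMap.range A.toLinearMap : Submodule ℂ H) : Set H))
    (hEig : A (T x) = lam • A x) :
    q * lam ∈ WqA A q T :=
  stmt_1_general A hA hrank T q hq lam x hx0 hxR hEig
end
end

section
/- Let T be an A-bounded operator and q ∈ D. If λ ∈ ℂ belongs to the A-approximate point spectrum of T, i.e. there exists a sequence (xₙ) in the closure of the range of A with ‖xₙ‖_A = 1 for all n and ‖(T − λI)xₙ‖_A → 0, then qλ belongs to the closure of W_{q,A}(T). -/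
noncomputable section

open Filter

variable {H : Type*} [NormedAddCommGroup H] [InnerProductSpace ℂ H] [CompleteSpace H]

/-!
Writing `⟨u, v⟩_A = ⟪√A v, √A u⟫` turns the `A`-semi-inner product into an honest inner product
of images, which gives Cauchy–Schwarz for `‖·‖_A`. Since `range A` has dimension at least two,
every `x` has an `A`-unit vector `z` that is `A`-orthogonal to it, and
`y = q̄ x + √(1 - |q|²) z` is then an `A`-unit vector with `⟨x, y⟩_A = q`. For the approximate
eigenvectors `xₙ` and the corresponding `yₙ`, `⟨T xₙ, yₙ⟩_A - q λ = ⟨(T - λ) xₙ, yₙ⟩_A`, which tends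
to `0` by Cauchy–Schwarz; so `q λ` is a limit of points of `W_{q,A}(T)`.
-/

open ComplexConjugate

theorem exists_ne_zero_map_eq_zero {K V : Type*} [Field K] [AddCommGroup V] [Module K V]
    (h : 2 ≤ Module.rank K V) (f : V →ₗ[K] K) : ∃ v, v ≠ 0 ∧ f v = 0 := by
  by_contra! hf
  have hinj : Function.Injective f := by
    rw [← LinearMap.ker_eq_bot, LinearMap.ker_eq_bot']
    exact fun v hv => by_contra fun hv0 => hf v hv0 hv
  have hle := (Cardinal.lift_le.mpr h).trans (LinearMap.lift_rank_le_of_injective f hinj)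
  simp only [Cardinal.lift_ofNat, Module.rank_self, Cardinal.lift_one] at hle
  exact absurd hle (by norm_num)

theorem norm_conj_smul_add_smul_eq_one {E : Type*} [NormedAddCommGroup E] [InnerProductSpace ℂ E]
    {a b : E} (ha : ‖a‖ = 1) (hb : ‖b‖ = 1) (hab : inner ℂ a b = 0) {q : ℂ} (hq : ‖q‖ ≤ 1) :
    ‖conj q • a + (√(1 - ‖q‖ ^ 2) : ℂ) • b‖ = 1 := by
  have hs : 0 ≤ 1 - ‖q‖ ^ 2 := by nlinarith [norm_nonneg q]
  have horth : inner ℂ (conj q • a) ((√(1 - ‖q‖ ^ 2) : ℂ) • b) = 0 := by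
    rw [inner_smul_left, inner_smul_right, hab, mul_zero, mul_zero]
  rw [← pow_eq_one_iff_of_nonneg (norm_nonneg _) two_ne_zero, sq,
    norm_add_sq_eq_norm_sq_add_norm_sq_of_inner_eq_zero _ _ horth, norm_smul, norm_smul, ha, hb,
    Complex.norm_real, Real.norm_of_nonneg (Real.sqrt_nonneg _), RCLike.norm_conj, mul_one,
    mul_one, Real.mul_self_sqrt hs]
  ring

theorem inner_conj_smul_add_smul_left {E : Type*} [NormedAddCommGroup E] [InnerProductSpace ℂ E]
    {a b : E} (ha : ‖a‖ = 1) (hab : inner ℂ a b = 0) (q : ℂ) (s : ℝ) :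
    inner ℂ (conj q • a + (s : ℂ) • b) a = q := by
  rw [inner_add_left, inner_smul_left, inner_smul_left, inner_eq_zero_symm.mp hab,
    inner_self_eq_norm_sq_to_K, ha]
  simp

section SemiInnerProduct

variable {A : H →L[ℂ] H}

omit [CompleteSpace H] in
theorem semiNormA_nonneg (v : H) : 0 ≤ semiNormA A v :=
  Real.sqrt_nonneg _

omit [CompleteSpace H] in
theorem sipA_sub_smul_left (u v y : H) (c : ℂ) :
    sipA A (u - c • v) y = sipA A u y - c * sipA A v y := by
  simp only [sipA, map_sub, map_smul, inner_sub_right, inner_smul_right]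

theorem sipA_eq_inner_sqrt (hA : A.IsPositive) (u v : H) :
    sipA A u v = inner ℂ (CFC.sqrt A v) (CFC.sqrt A u) := by
  have hA₀ : 0 ≤ A := (ContinuousLinearMap.nonneg_iff_isPositive A).mpr hA
  have hS : (CFC.sqrt A).IsPositive :=
    (ContinuousLinearMap.nonneg_iff_isPositive _).mp (CFC.sqrt_nonneg A)
  rw [sipA, show A u = (CFC.sqrt A * CFC.sqrt A) u by rw [CFC.sqrt_mul_sqrt_self A hA₀]]
  exact (hS.isSelfAdjoint.isSymmetric _ _).symm

theorem semiNormA_eq_norm_sqrt (hA : A.IsPositive) (v : H) :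
    semiNormA A v = ‖CFC.sqrt A v‖ := by
  rw [semiNormA, sipA_eq_inner_sqrt hA, ← RCLike.re_eq_complex_re, inner_self_eq_norm_sq,
    Real.sqrt_sq (norm_nonneg _)]

theorem norm_sipA_le (hA : A.IsPositive) (u v : H) :
    ‖sipA A u v‖ ≤ semiNormA A u * semiNormA A v := by
  rw [sipA_eq_inner_sqrt hA, semiNormA_eq_norm_sqrt hA, semiNormA_eq_norm_sqrt hA, mul_comm]
  exact norm_inner_le_norm _ _

theorem semiNormA_ne_zero_of_mem_range (hA : A.IsPositive) {w : H}
    (hw : w ∈ LinearMap.range A.toLinearMap) (hw₀ : w ≠ 0) : semiNormA A w ≠ 0 := by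
  obtain ⟨p, hp⟩ := hw
  intro h
  have hle := norm_sipA_le hA p w
  rw [h, mul_zero, norm_le_zero_iff, sipA, show A p = w from hp] at hle
  exact hw₀ (inner_self_eq_zero.mp hle)

theorem exists_semiNormA_eq_one_sipA_eq_zero (hA : A.IsPositive)
    (hrank : 2 ≤ Module.rank ℂ (LinearMap.range A.toLinearMap)) (u : H) :
    ∃ z, semiNormA A z = 1 ∧ sipA A u z = 0 := by
  obtain ⟨⟨w, hw⟩, hw₀, hwu⟩ := exists_ne_zero_map_eq_zero hrank
    ((innerSL ℂ (A u)).toLinearMap ∘ₗ (LinearMap.range A.toLinearMap).subtype)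
  have hw₀' : w ≠ 0 := fun h => hw₀ (Subtype.ext h)
  have hN := semiNormA_ne_zero_of_mem_range hA hw hw₀'
  refine ⟨(((semiNormA A w)⁻¹ : ℝ) : ℂ) • w, ?_, ?_⟩
  · rw [semiNormA_eq_norm_sqrt hA, map_smul, norm_smul, ← semiNormA_eq_norm_sqrt hA,
      Complex.norm_real, norm_inv, Real.norm_of_nonneg (semiNormA_nonneg w),
      inv_mul_cancel₀ hN]
  · have hwu' : inner ℂ w (A u) = 0 := inner_eq_zero_symm.mp hwu
    rw [sipA, inner_smul_left, hwu', mul_zero]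

theorem exists_semiNormA_eq_one_sipA_eq (hA : A.IsPositive)
    (hrank : 2 ≤ Module.rank ℂ (LinearMap.range A.toLinearMap))
    {q : ℂ} (hq : ‖q‖ ≤ 1) {x : H} (hx : semiNormA A x = 1) :
    ∃ y, semiNormA A y = 1 ∧ sipA A x y = q := by
  obtain ⟨z, hz, hxz⟩ := exists_semiNormA_eq_one_sipA_eq_zero hA hrank x
  rw [semiNormA_eq_norm_sqrt hA] at hx hz
  rw [sipA_eq_inner_sqrt hA] at hxz
  have hSxz := inner_eq_zero_symm.mp hxz
  refine ⟨conj q • x + (√(1 - ‖q‖ ^ 2) : ℂ) • z, ?_, ?_⟩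
  · rw [semiNormA_eq_norm_sqrt hA, map_add, map_smul, map_smul]
    exact norm_conj_smul_add_smul_eq_one hx hz hSxz hq
  · rw [sipA_eq_inner_sqrt hA, map_add, map_smul, map_smul]
    exact inner_conj_smul_add_smul_left hx hSxz q _

end SemiInnerProduct

theorem stmt_2_general (A : H →L[ℂ] H) (hA : A.IsPositive)
    (hrank : 2 ≤ Module.rank ℂ (LinearMap.range A.toLinearMap))
    (T : H →L[ℂ] H)
    (q : ℂ) (hq : ‖q‖ ≤ 1)
    (lam : ℂ) (x : ℕ → H)
    (hxnorm : ∀ n, semiNormA A (x n) = 1)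
    (happrox : Tendsto (fun n => semiNormA A (T (x n) - lam • x n)) atTop (nhds 0)) :
    q * lam ∈ closure (WqA A q T) := by
  choose y hynorm hxy using fun n => exists_semiNormA_eq_one_sipA_eq hA hrank hq (hxnorm n)
  have hdist : ∀ n, dist (sipA A (T (x n)) (y n)) (q * lam) ≤
      semiNormA A (T (x n) - lam • x n) := fun n => by
    calc dist (sipA A (T (x n)) (y n)) (q * lam)
        = ‖sipA A (T (x n) - lam • x n) (y n)‖ := by
          rw [dist_eq_norm, sipA_sub_smul_left, hxy, mul_comm]
      _ ≤ semiNormA A (T (x n) - lam • x n) * semiNormA A (y n) := norm_sipA_le hA _ _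
      _ = semiNormA A (T (x n) - lam • x n) := by rw [hynorm, mul_one]
  have hlim : Tendsto (fun n => sipA A (T (x n)) (y n)) atTop (nhds (q * lam)) :=
    tendsto_iff_dist_tendsto_zero.mpr (squeeze_zero (fun _ => dist_nonneg) hdist happrox)
  exact mem_closure_of_tendsto hlim
    (Eventually.of_forall fun n => ⟨x n, y n, hxnorm n, hynorm n, hxy n, rfl⟩)

theorem stmt_2 (A : H →L[ℂ] H) (hA : A.IsPositive)
    (hrank : 2 ≤ Module.rank ℂ (LinearMap.range A.toLinearMap))
    (T : H →L[ℂ] H) (hT : ABounded A T)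
    (q : ℂ) (hq : ‖q‖ ≤ 1)
    (lam : ℂ) (x : ℕ → H)
    (hxR : ∀ n, x n ∈ closure ((LinearMap.range A.toLinearMap : Submodule ℂ H) : Set H))
    (hxnorm : ∀ n, semiNormA A (x n) = 1)
    (happrox : Tendsto (fun n => semiNormA A (T (x n) - lam • x n)) atTop (nhds 0)) :
    q * lam ∈ closure (WqA A q T) :=
  stmt_2_general A hA hrank T q hq lam x hxnorm happrox
end
end

section
/- Let T be an A-bounded operator, q ∈ D, and let U, V be bounded operators on H such that AV = U*A (V is an A-adjoint of U) and ‖Ux‖_A = ‖Vx‖_A = ‖x‖_A for all x ∈ H (U is A-unitary with V = U^#). Then W_{q,A}(U T V) = W_{q,A}(T). -/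
noncomputable section

open Filter

variable {H : Type*} [NormedAddCommGroup H] [InnerProductSpace ℂ H] [CompleteSpace H]

/-!
An `A`-isometry `W` satisfies `W† A W = A` by polarization, so it preserves `⟨·,·⟩_A`; and
`A V = U† A` moves `U` across `⟨·,·⟩_A` as `V`. Hence `⟨U T V x, y⟩_A = ⟨T V x, V y⟩_A`, and
`V` carries the data `(x, y)` of a point of `W_{q,A}(U T V)` to data for `W_{q,A}(T)`.
Conversely `U` carries `(x, y)` to `(U x, U y)` with `⟨U T V U x, U y⟩_A = ⟨T V U x, y⟩_A`, and
this equals `⟨T x, y⟩_A` because `A (V U x) = A x` and an `A`-bounded `T` maps the `A`-null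
vector `V U x - x` into `ker A`.
-/

open ContinuousLinearMap

namespace ContinuousLinearMap.IsPositive

theorem sipA_self {E : Type*} [NormedAddCommGroup E] [InnerProductSpace ℂ E] {A : E →L[ℂ] E}
    (hA : A.IsPositive) (x : E) : sipA A x x = ((semiNormA A x ^ 2 : ℝ) : ℂ) := by
  have hre : 0 ≤ (sipA A x x).re := hA.re_inner_nonneg_right x
  rw [semiNormA, Real.sq_sqrt hre]
  exact Complex.eq_re_of_ofReal_le (hA.inner_nonneg_right x)

variable {A : H →L[ℂ] H}

theorem semiNormA_eq_norm_sqrt (hA : A.IsPositive) (x : H) :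
    semiNormA A x = ‖CFC.sqrt A x‖ := by
  set S := CFC.sqrt A
  have hS : IsSelfAdjoint S := IsSelfAdjoint.of_nonneg (CFC.sqrt_nonneg A)
  have hSS : S (S x) = A x := by
    rw [← mul_apply_eq_comp, CFC.sqrt_mul_sqrt_self A ((nonneg_iff_isPositive A).mpr hA)]
  rw [semiNormA, sipA, ← hSS, ← hS.adjoint_eq, adjoint_inner_right, hS.adjoint_eq,
    ← RCLike.re_to_complex, inner_self_eq_norm_sq, Real.sqrt_sq (norm_nonneg _)]

theorem semiNormA_eq_zero_iff (hA : A.IsPositive) {x : H} : semiNormA A x = 0 ↔ A x = 0 := by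
  refine ⟨fun h => ?_, fun h => by simp [semiNormA, sipA, h]⟩
  rw [hA.semiNormA_eq_norm_sqrt, norm_eq_zero] at h
  rw [← CFC.sqrt_mul_sqrt_self A ((nonneg_iff_isPositive A).mpr hA), mul_apply_eq_comp, h,
    map_zero]

theorem adjoint_comp_comp_eq_of_semiNormA_map_eq {W : H →L[ℂ] H} (hA : A.IsPositive)
    (hW : ∀ x, semiNormA A (W x) = semiNormA A x) : adjoint W ∘L A ∘L W = A := by
  have hsip : ∀ x, inner ℂ (A x) x = sipA A x x := fun x => hA.inner_left_eq_inner_right x x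
  apply coe_injective
  rw [← ext_inner_map]
  intro x
  simp only [coe_coe, comp_apply, adjoint_inner_left, hsip, hA.sipA_self, hW]

theorem sipA_map_map_of_semiNormA_map_eq {W : H →L[ℂ] H} (hA : A.IsPositive)
    (hW : ∀ x, semiNormA A (W x) = semiNormA A x) (x y : H) :
    sipA A (W x) (W y) = sipA A x y := by
  rw [sipA, ← adjoint_inner_right, ← comp_apply A, ← comp_apply (adjoint W),
    hA.adjoint_comp_comp_eq_of_semiNormA_map_eq hW, sipA]

end ContinuousLinearMap.IsPositive

theorem sipA_apply_left_of_comp_eq_adjoint_comp {A U V : H →L[ℂ] H} (hA : IsSelfAdjoint A)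
    (hAdj : A ∘L V = adjoint U ∘L A) (x y : H) : sipA A (U x) y = sipA A x (V y) := by
  have hsym : ∀ a b, inner ℂ (A a) b = inner ℂ a (A b) := hA.isSymmetric
  calc sipA A (U x) y = starRingEnd ℂ (inner ℂ (U x) (A y)) := by
        rw [sipA, ← hsym, inner_conj_symm]
    _ = starRingEnd ℂ (inner ℂ x (A (V y))) := by
        rw [← comp_apply A V, hAdj, comp_apply, adjoint_inner_right]
    _ = sipA A x (V y) := by rw [sipA, ← hsym, inner_conj_symm]

theorem ABounded.apply_eq_of_apply_eq {A T : H →L[ℂ] H} (hA : A.IsPositive) (hT : ABounded A T)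
    {x x' : H} (h : A x = A x') : A (T x) = A (T x') := by
  obtain ⟨c, -, hc⟩ := hT
  have hnull : semiNormA A (x - x') = 0 :=
    hA.semiNormA_eq_zero_iff.mpr (by rw [map_sub, h, sub_self])
  have hTnull : semiNormA A (T (x - x')) = 0 :=
    le_antisymm (by simpa [hnull] using hc (x - x')) (Real.sqrt_nonneg _)
  rw [← sub_eq_zero, ← map_sub, ← map_sub]
  exact hA.semiNormA_eq_zero_iff.mp hTnull

theorem stmt_3_general (A : H →L[ℂ] H) (hA : A.IsPositive)
    (T : H →L[ℂ] H) (hT : ABounded A T)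
    (q : ℂ)
    (U V : H →L[ℂ] H)
    (hAdj : A.comp V = (ContinuousLinearMap.adjoint U).comp A)
    (hUiso : ∀ x : H, semiNormA A (U x) = semiNormA A x)
    (hViso : ∀ x : H, semiNormA A (V x) = semiNormA A x) :
    WqA A q (U.comp (T.comp V)) = WqA A q T := by
  have hVU : ∀ x, A (V (U x)) = A x := fun x => by
    rw [← comp_apply A V, hAdj, comp_apply, ← comp_apply A U, ← comp_apply (adjoint U),
      hA.adjoint_comp_comp_eq_of_semiNormA_map_eq hUiso]
  ext z
  constructor
  · rintro ⟨x, y, hx, hy, hxy, rfl⟩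
    refine ⟨V x, V y, by rw [hViso, hx], by rw [hViso, hy], ?_, ?_⟩
    · rw [hA.sipA_map_map_of_semiNormA_map_eq hViso, hxy]
    · exact sipA_apply_left_of_comp_eq_adjoint_comp hA.isSelfAdjoint hAdj _ _
  · rintro ⟨x, y, hx, hy, hxy, rfl⟩
    refine ⟨U x, U y, by rw [hUiso, hx], by rw [hUiso, hy], ?_, ?_⟩
    · rw [hA.sipA_map_map_of_semiNormA_map_eq hUiso, hxy]
    · rw [comp_apply, comp_apply, hA.sipA_map_map_of_semiNormA_map_eq hUiso, sipA, sipA,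
        hT.apply_eq_of_apply_eq hA (hVU x)]

theorem stmt_3 (A : H →L[ℂ] H) (hA : A.IsPositive)
    (T : H →L[ℂ] H) (hT : ABounded A T)
    (q : ℂ) (hq : ‖q‖ ≤ 1)
    (U V : H →L[ℂ] H)
    (hAdj : A.comp V = (ContinuousLinearMap.adjoint U).comp A)
    (hUiso : ∀ x : H, semiNormA A (U x) = semiNormA A x)
    (hViso : ∀ x : H, semiNormA A (V x) = semiNormA A x) :
    WqA A q (U.comp (T.comp V)) = WqA A q T :=
  stmt_3_general A hA T hT q U V hAdj hUiso hViso
end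
end

section
/- Let T be an A-bounded operator and q ∈ D, and suppose the range of A has dimension at least 2. Then W_{q,A}(T) = { q⟨Tx,x⟩_A + √(1−|q|²)·⟨Tx,z⟩_A : x,z ∈ H, ‖x‖_A = ‖z‖_A = 1, ⟨x,z⟩_A = 0 }. -/
noncomputable section

open Filter

variable {H : Type*} [NormedAddCommGroup H] [InnerProductSpace ℂ H] [CompleteSpace H]

/-!
Write `y = q̄ x + u` with `u` A-orthogonal to `x`; Pythagoras gives `‖u‖_A² = 1 - |q|²`, so
`⟨T x, y⟩_A = q ⟨T x, x⟩_A + √(1 - |q|²) ⟨T x, z⟩_A` for the A-unit vector `z` in the direction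
of `u`. When `|q| = 1` the vector `u` is A-null, hence by Cauchy–Schwarz A-orthogonal to
everything, and any A-unit `z` A-orthogonal to `x` will do; such a `z` exists because otherwise
`A` would vanish on the A-orthogonal complement of `x` and have rank at most 1. Conversely `y = q̄ x + √(1 - |q|²) z` is an
A-unit vector with `⟨x, y⟩_A = q`.
-/

open ComplexConjugate

variable {E : Type*} [NormedAddCommGroup E] [InnerProductSpace ℂ E] {A : E →L[ℂ] E}

@[simp]
lemma sipA_sub_right (x y y' : E) : sipA A x (y - y') = sipA A x y - sipA A x y' := by
  simp [sipA]

lemma sipA_smul_self (c : ℂ) (x : E) :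
    sipA A (c • x) (c • x) = (‖c‖ ^ 2 : ℝ) * sipA A x x := by
  rw [sipA_smul_left, sipA_smul_right, ← mul_assoc, Complex.mul_conj,
    Complex.normSq_eq_norm_sq, Complex.ofReal_pow]

lemma semiNormA_smul (c : ℂ) (x : E) : semiNormA A (c • x) = ‖c‖ * semiNormA A x := by
  rw [semiNormA, sipA_smul_self, Complex.re_ofReal_mul, Real.sqrt_mul (by positivity),
    Real.sqrt_sq (norm_nonneg c), semiNormA]

lemma semiNormA_inv_smul_self {v : E} (hv : semiNormA A v ≠ 0) :
    semiNormA A ((semiNormA A v : ℂ)⁻¹ • v) = 1 := by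
  have hv' : 0 ≤ semiNormA A v := Real.sqrt_nonneg _
  rw [semiNormA_smul, norm_inv, Complex.norm_real, Real.norm_of_nonneg hv', inv_mul_cancel₀ hv]

namespace LinearMap.IsSymmetric

variable (hA : (A : E →ₗ[ℂ] E).IsSymmetric)
include hA

lemma conj_sipA (x y : E) : conj (sipA A x y) = sipA A y x := by
  rw [sipA, sipA, inner_conj_symm]
  exact hA x y

lemma ofReal_re_sipA_self (x : E) : ((sipA A x x).re : ℂ) = sipA A x x :=
  Complex.conj_eq_iff_re.mp (hA.conj_sipA x x)

lemma semiNormA_eq_one_iff {x : E} : semiNormA A x = 1 ↔ sipA A x x = 1 := by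
  rw [semiNormA, Real.sqrt_eq_one]
  nth_rw 2 [← hA.ofReal_re_sipA_self x]
  exact Complex.ofReal_eq_one.symm

lemma sipA_add_self_of_sipA_eq_zero {x z : E} (h : sipA A x z = 0) :
    sipA A (x + z) (x + z) = sipA A x x + sipA A z z := by
  have h' : sipA A z x = 0 := by rw [← hA.conj_sipA, h, map_zero]
  simp only [sipA_add_left, sipA_add_right, h, h']
  ring

lemma mem_WqA (T : E →L[ℂ] E) {q : ℂ} (hq : ‖q‖ ≤ 1) {x z : E} (hx : semiNormA A x = 1)
    (hz : semiNormA A z = 1) (hxz : sipA A x z = 0) :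
    q * sipA A (T x) x + (Real.sqrt (1 - ‖q‖ ^ 2) : ℂ) * sipA A (T x) z ∈ WqA A q T := by
  rw [hA.semiNormA_eq_one_iff] at hx hz
  set s := Real.sqrt (1 - ‖q‖ ^ 2)
  have hs : s ^ 2 = 1 - ‖q‖ ^ 2 := Real.sq_sqrt (by nlinarith [norm_nonneg q])
  set y := conj q • x + (s : ℂ) • z
  have hxy : sipA A x y = q := by
    rw [sipA_add_right, sipA_smul_right, sipA_smul_right, Complex.conj_conj, hx, hxz]
    ring
  have hyy : sipA A y y = 1 := by
    have hxsz : sipA A (conj q • x) ((s : ℂ) • z) = 0 := by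
      rw [sipA_smul_left, sipA_smul_right, hxz, mul_zero, mul_zero]
    rw [hA.sipA_add_self_of_sipA_eq_zero hxsz, sipA_smul_self, sipA_smul_self, hx, hz,
      RCLike.norm_conj, Complex.norm_real, Real.norm_eq_abs, sq_abs, hs]
    push_cast
    ring
  refine ⟨x, y, by rwa [hA.semiNormA_eq_one_iff], by rwa [hA.semiNormA_eq_one_iff], hxy, ?_⟩
  rw [sipA_add_right, sipA_smul_right, sipA_smul_right, Complex.conj_conj, Complex.conj_ofReal]

end LinearMap.IsSymmetric

namespace ContinuousLinearMap.IsPositive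

variable (hA : A.IsPositive)
include hA

lemma sq_semiNormA (x : E) : semiNormA A x ^ 2 = (sipA A x x).re :=
  Real.sq_sqrt (hA.re_inner_nonneg_right x)

lemma norm_sipA_sq_le_s7 (x y : E) :
    ‖sipA A x y‖ ^ 2 ≤ (sipA A x x).re * (sipA A y y).re := by
  let core : PreInnerProductSpace.Core ℂ E :=
    { inner := fun x y => sipA A y x
      conj_inner_symm := fun x y => hA.isSymmetric.conj_sipA x y
      re_inner_nonneg := hA.re_inner_nonneg_right
      add_left := fun x y z => sipA_add_right z x y
      smul_left := fun x y r => sipA_smul_right r y x }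
  have hcs := @InnerProductSpace.Core.inner_mul_inner_self_le ℂ E _ _ _ core y x
  change ‖sipA A x y‖ * ‖sipA A y x‖ ≤ (sipA A y y).re * (sipA A x x).re at hcs
  rwa [← hA.isSymmetric.conj_sipA x y, RCLike.norm_conj, ← sq, mul_comm] at hcs

lemma sipA_eq_zero_of_sipA_self_eq_zero {u : E} (hu : sipA A u u = 0) (w : E) :
    sipA A u w = 0 := by
  have hcs := hA.norm_sipA_sq_le_s7 u w
  rw [hu, Complex.zero_re, zero_mul] at hcs
  exact norm_eq_zero.mp (pow_eq_zero_iff two_ne_zero |>.mp (le_antisymm hcs (by positivity)))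

lemma map_eq_zero_of_sipA_self_eq_zero {u : E} (hu : sipA A u u = 0) : A u = 0 :=
  inner_self_eq_zero.mp (hA.sipA_eq_zero_of_sipA_self_eq_zero hu (A u))

lemma rank_range_le_one {x : E} (hx : sipA A x x = 1)
    (hnull : ∀ v, sipA A x v = 0 → sipA A v v = 0) :
    Module.rank ℂ (LinearMap.range A.toLinearMap) ≤ 1 := by
  have hle : LinearMap.range A.toLinearMap ≤ Submodule.span ℂ {A x} := by
    rintro _ ⟨u, rfl⟩
    set c := conj (sipA A x u)
    have hv : sipA A x (u - c • x) = 0 := by simp [c, hx]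
    have hAu : A u = c • A x := by
      simpa [sub_eq_zero] using hA.map_eq_zero_of_sipA_self_eq_zero (hnull _ hv)
    exact hAu ▸ Submodule.smul_mem _ _ (Submodule.mem_span_singleton_self _)
  calc Module.rank ℂ (LinearMap.range A.toLinearMap)
      ≤ Module.rank ℂ (Submodule.span ℂ ({A x} : Set E)) := Submodule.rank_mono hle
    _ ≤ Cardinal.mk ({A x} : Set E) := rank_span_le _
    _ = 1 := Cardinal.mk_singleton _

lemma exists_semiNormA_eq_one_sipA_eq_zero
    (hrank : 2 ≤ Module.rank ℂ (LinearMap.range A.toLinearMap)) {x : E} (hx : sipA A x x = 1) :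
    ∃ z, semiNormA A z = 1 ∧ sipA A x z = 0 := by
  by_contra! hnone
  refine absurd (hrank.trans (hA.rank_range_le_one hx fun v hv => ?_)) (by norm_num)
  by_contra hvv
  have hv0 : semiNormA A v ≠ 0 := by
    intro h0
    apply hvv
    rw [← hA.isSymmetric.ofReal_re_sipA_self, ← hA.sq_semiNormA, h0]
    simp
  exact hnone _ (semiNormA_inv_smul_self hv0) (by simp [hv])

/-- `u` pairs like `‖u‖_A • z`; when `u` is `A`-null, any `A`-unit `z` `A`-orthogonal to `x`
will do. -/
lemma exists_sipA_eq_semiNormA_mul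
    (hrank : 2 ≤ Module.rank ℂ (LinearMap.range A.toLinearMap)) {x u : E} (hx : sipA A x x = 1)
    (hu : sipA A x u = 0) :
    ∃ z, semiNormA A z = 1 ∧ sipA A x z = 0 ∧ ∀ w, sipA A w u = semiNormA A u * sipA A w z := by
  by_cases hu0 : semiNormA A u = 0
  · obtain ⟨z, hz, hxz⟩ := hA.exists_semiNormA_eq_one_sipA_eq_zero hrank hx
    have huu : sipA A u u = 0 := by
      rw [← hA.isSymmetric.ofReal_re_sipA_self, ← hA.sq_semiNormA, hu0]
      simp
    refine ⟨z, hz, hxz, fun w => ?_⟩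
    rw [← hA.isSymmetric.conj_sipA, hA.sipA_eq_zero_of_sipA_self_eq_zero huu, hu0]
    simp
  · refine ⟨(semiNormA A u : ℂ)⁻¹ • u, semiNormA_inv_smul_self hu0, by simp [hu], fun w => ?_⟩
    rw [sipA_smul_right, map_inv₀, Complex.conj_ofReal, ← mul_assoc,
      mul_inv_cancel₀ (Complex.ofReal_ne_zero.mpr hu0), one_mul]

lemma exists_of_mem_WqA (hrank : 2 ≤ Module.rank ℂ (LinearMap.range A.toLinearMap))
    {T : E →L[ℂ] E} {q w : ℂ} (hw : w ∈ WqA A q T) :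
    ∃ x z : E, semiNormA A x = 1 ∧ semiNormA A z = 1 ∧ sipA A x z = 0 ∧
      w = q * sipA A (T x) x + (Real.sqrt (1 - ‖q‖ ^ 2) : ℂ) * sipA A (T x) z := by
  obtain ⟨x, y, hx, hy, hxy, rfl⟩ := hw
  rw [hA.isSymmetric.semiNormA_eq_one_iff] at hx hy
  set u := y - conj q • x
  have hxu : sipA A x u = 0 := by simp [u, hx, hxy]
  have huu : (sipA A u u).re = 1 - ‖q‖ ^ 2 := by
    have hpyth := hA.isSymmetric.sipA_add_self_of_sipA_eq_zero (x := conj q • x) (z := u)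
      (by simp [hxu])
    rw [add_sub_cancel, hy, sipA_smul_self, hx, RCLike.norm_conj] at hpyth
    rw [eq_sub_of_add_eq' hpyth.symm, mul_one, ← Complex.ofReal_one, ← Complex.ofReal_sub,
      Complex.ofReal_re]
  obtain ⟨z, hz, hxz, hzu⟩ := hA.exists_sipA_eq_semiNormA_mul hrank hx hxu
  refine ⟨x, z, by rwa [hA.isSymmetric.semiNormA_eq_one_iff], hz, hxz, ?_⟩
  have hsu : semiNormA A u = Real.sqrt (1 - ‖q‖ ^ 2) := by rw [semiNormA, huu]
  rw [← hsu, ← hzu, show y = conj q • x + u by simp [u], sipA_add_right,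
    sipA_smul_right, Complex.conj_conj]

end ContinuousLinearMap.IsPositive

theorem stmt_7_general (A : H →L[ℂ] H) (hA : A.IsPositive)
    (hrank : 2 ≤ Module.rank ℂ (LinearMap.range A.toLinearMap))
    (T : H →L[ℂ] H)
    (q : ℂ) (hq : ‖q‖ ≤ 1) :
    WqA A q T = {w : ℂ | ∃ x z : H, semiNormA A x = 1 ∧ semiNormA A z = 1 ∧
      sipA A x z = 0 ∧
      w = q * sipA A (T x) x +
        (Real.sqrt (1 - ‖q‖ ^ 2) : ℂ) * sipA A (T x) z} := by
  ext w
  refine ⟨hA.exists_of_mem_WqA hrank, ?_⟩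
  rintro ⟨x, z, hx, hz, hxz, rfl⟩
  exact hA.isSymmetric.mem_WqA T hq hx hz hxz

theorem stmt_7 (A : H →L[ℂ] H) (hA : A.IsPositive)
    (hrank : 2 ≤ Module.rank ℂ (LinearMap.range A.toLinearMap))
    (T : H →L[ℂ] H) (hT : ABounded A T)
    (q : ℂ) (hq : ‖q‖ ≤ 1) :
    WqA A q T = {w : ℂ | ∃ x z : H, semiNormA A x = 1 ∧ semiNormA A z = 1 ∧
      sipA A x z = 0 ∧
      w = q * sipA A (T x) x +
        (Real.sqrt (1 - ‖q‖ ^ 2) : ℂ) * sipA A (T x) z} :=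
  stmt_7_general A hA hrank T q hq
end
end

section
/- Let T be a bounded operator admitting an A-adjoint (there exists a bounded W with AW = T*A), let q ∈ D, and suppose the range of A has dimension at least 2. Then (|q|/2)·‖T‖_A ≤ w_{q,A}(T) ≤ ‖T‖_A, where ‖T‖_A = sup{‖Tx‖_A : x ∈ H, ‖x‖_A ≤ 1}. -/
noncomputable section

open Filter

variable {H : Type*} [NormedAddCommGroup H] [InnerProductSpace ℂ H] [CompleteSpace H]

/-!
Factor `A = R* R` (a positive operator is `star b * b` in the C*-algebra of operators), so that
`‖x‖_A = ‖R x‖` and `⟨x, y⟩_A = ⟪R y, R x⟫`. The `A`-adjoint `W` makes `W T` self-adjoint for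
`⟪R ·, R ·⟫`, and iterating Cauchy–Schwarz, `‖R S^k x‖² ≤ ‖R x‖ ‖R S^{2k} x‖`, bounds such an `S`
by `‖R S x‖ ≤ ‖S‖ ‖R x‖`; hence `T` is `A`-bounded and both suprema are genuine. The upper bound
is Cauchy–Schwarz. For the lower bound, given `‖u‖_A = 1` take `v` with `‖v‖_A = 1` and
`⟨u, v⟩_A = 0` (this is where `dim ran A ≥ 2` enters): the vectors `q̄ u ± √(1 - |q|²) v` produce two points of
`W_{q,A}(T)` whose average is `q ⟨T u, u⟩_A`, so `|q| |⟨T u, u⟩_A| ≤ w_{q,A}(T) ‖u‖_A²`.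
Polarization bounds `|q| |⟨T x, y⟩_A|` by `w_{q,A}(T) (‖x‖_A² + ‖y‖_A²)`, and `y = T x / ‖T x‖_A`
gives `|q| ‖T‖_A ≤ 2 w_{q,A}(T)`.
-/

open scoped InnerProductSpace

section IteratedCauchySchwarz

variable {𝕜 E : Type*} [RCLike 𝕜] [NormedAddCommGroup E] [InnerProductSpace 𝕜 E]
  [CompleteSpace E] {R S : E →L[𝕜] E}

lemma inner_apply_apply_eq_inner_star_mul_self (R : E →L[𝕜] E) (x y : E) :
    ⟪R x, R y⟫_𝕜 = ⟪x, (star R * R) y⟫_𝕜 := by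
  rw [ContinuousLinearMap.star_eq_adjoint, mul_apply_eq_comp,
    ContinuousLinearMap.adjoint_inner_right]

-- `SemiconjBy (star R * R) S (star S)` says that `S` is self-adjoint for `⟪R ·, R ·⟫`.
lemma norm_apply_pow_sq_le (hS : SemiconjBy (star R * R) S (star S)) (x : E) (k : ℕ) :
    ‖R ((S ^ k) x)‖ ^ 2 ≤ ‖R x‖ * ‖R ((S ^ (2 * k)) x)‖ := by
  have hk : star (S ^ k) * (star R * R) = star R * R * S ^ k := by
    rw [star_pow, (hS.pow_right k).eq]
  have key : ⟪R ((S ^ k) x), R ((S ^ k) x)⟫_𝕜 = ⟪R x, R ((S ^ (2 * k)) x)⟫_𝕜 := by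
    rw [inner_apply_apply_eq_inner_star_mul_self, inner_apply_apply_eq_inner_star_mul_self,
      ← mul_apply_eq_comp, ← ContinuousLinearMap.adjoint_inner_right,
      ← ContinuousLinearMap.star_eq_adjoint, ← mul_apply_eq_comp, ← mul_assoc, hk,
      two_mul, pow_add, mul_assoc, mul_apply_eq_comp]
  rw [norm_sq_eq_re_inner (𝕜 := 𝕜), key]
  exact re_inner_le_norm _ _

lemma norm_apply_pow_two_pow_le (hS : SemiconjBy (star R * R) S (star S)) (x : E) (n : ℕ) :
    ‖R (S x)‖ ^ 2 ^ n ≤ ‖R ((S ^ 2 ^ n) x)‖ * ‖R x‖ ^ (2 ^ n - 1) := by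
  induction n with
  | zero => simp
  | succ n ih =>
    have hexp : 2 ^ (n + 1) - 1 = 1 + 2 * (2 ^ n - 1) := by
      have := Nat.one_le_two_pow (n := n); rw [pow_succ]; omega
    calc ‖R (S x)‖ ^ 2 ^ (n + 1) = (‖R (S x)‖ ^ 2 ^ n) ^ 2 := by rw [pow_succ, pow_mul]
      _ ≤ (‖R ((S ^ 2 ^ n) x)‖ * ‖R x‖ ^ (2 ^ n - 1)) ^ 2 := by gcongr
      _ = ‖R ((S ^ 2 ^ n) x)‖ ^ 2 * ‖R x‖ ^ (2 * (2 ^ n - 1)) := by rw [mul_pow, ← pow_mul']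
      _ ≤ ‖R x‖ * ‖R ((S ^ (2 * 2 ^ n)) x)‖ * ‖R x‖ ^ (2 * (2 ^ n - 1)) := by
        gcongr; exact norm_apply_pow_sq_le hS x _
      _ = ‖R ((S ^ 2 ^ (n + 1)) x)‖ * ‖R x‖ ^ (2 ^ (n + 1) - 1) := by
        rw [hexp, pow_succ' 2 n, pow_add]; ring

lemma le_one_of_forall_pow_two_pow_le {t C : ℝ} (h : ∀ n : ℕ, t ^ 2 ^ n ≤ C) : t ≤ 1 := by
  by_contra! ht
  obtain ⟨n, hn⟩ := pow_unbounded_of_one_lt C ht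
  exact (hn.trans_le (pow_le_pow_right₀ ht.le Nat.lt_two_pow_self.le)).not_ge (h n)

lemma norm_apply_le_of_semiconjBy (hS : SemiconjBy (star R * R) S (star S)) (x : E) :
    ‖R (S x)‖ ≤ ‖S‖ * ‖R x‖ := by
  rcases (norm_nonneg (R x)).eq_or_lt with hx | hx
  · have := norm_apply_pow_sq_le hS x 1
    rw [← hx, zero_mul, pow_one] at this
    rw [← hx, mul_zero]
    nlinarith [norm_nonneg (R (S x))]
  rcases (norm_nonneg S).eq_or_lt with hS0 | hS0
  · simp [norm_eq_zero.mp hS0.symm]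
  have hpos : 0 < ‖S‖ * ‖R x‖ := mul_pos hS0 hx
  suffices ‖R (S x)‖ / (‖S‖ * ‖R x‖) ≤ 1 by rwa [div_le_one hpos] at this
  refine le_one_of_forall_pow_two_pow_le (C := ‖R‖ * ‖x‖ / ‖R x‖) fun n => ?_
  rw [div_pow, div_le_div_iff₀ (by positivity) hx]
  calc ‖R (S x)‖ ^ 2 ^ n * ‖R x‖
      ≤ ‖R ((S ^ 2 ^ n) x)‖ * ‖R x‖ ^ (2 ^ n - 1) * ‖R x‖ := by
        gcongr; exact norm_apply_pow_two_pow_le hS x n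
    _ = ‖R ((S ^ 2 ^ n) x)‖ * ‖R x‖ ^ 2 ^ n := by
        rw [mul_assoc, ← pow_succ, Nat.sub_add_cancel Nat.one_le_two_pow]
    _ ≤ ‖R‖ * (‖S‖ ^ 2 ^ n * ‖x‖) * ‖R x‖ ^ 2 ^ n := by
        gcongr
        calc ‖R ((S ^ 2 ^ n) x)‖ ≤ ‖R‖ * ‖(S ^ 2 ^ n) x‖ := R.le_opNorm _
          _ ≤ ‖R‖ * (‖S ^ 2 ^ n‖ * ‖x‖) := by gcongr; exact (S ^ 2 ^ n).le_opNorm x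
          _ ≤ ‖R‖ * (‖S‖ ^ 2 ^ n * ‖x‖) := by gcongr; exact norm_pow_le' S (by positivity)
    _ = ‖R‖ * ‖x‖ * (‖S‖ * ‖R x‖) ^ 2 ^ n := by ring

lemma semiconjBy_mul_of_mul_eq {T W : E →L[𝕜] E}
    (hW : star R * R * W = star T * (star R * R)) :
    SemiconjBy (star R * R) (W * T) (star (W * T)) := by
  have hW' : star W * (star R * R) = star R * R * T := by
    simpa [mul_assoc] using congrArg star hW
  calc star R * R * (W * T) = star T * (star R * R) * T := by rw [← mul_assoc, hW]
    _ = star (W * T) * (star R * R) := by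
      rw [star_mul, mul_assoc (star T) (star W), hW', ← mul_assoc (star T) (star R * R) T]

lemma norm_apply_sq_le_of_mul_eq {T W : E →L[𝕜] E}
    (hW : star R * R * W = star T * (star R * R)) (x : E) :
    ‖R (T x)‖ ^ 2 ≤ ‖W * T‖ * ‖R x‖ ^ 2 := by
  have key : ⟪R (T x), R (T x)⟫_𝕜 = ⟪R x, R ((W * T) x)⟫_𝕜 := by
    rw [inner_apply_apply_eq_inner_star_mul_self, inner_apply_apply_eq_inner_star_mul_self,
      ← mul_apply_eq_comp (star R * R) (W * T), ← mul_assoc, hW, mul_assoc,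
      mul_apply_eq_comp (star T), ContinuousLinearMap.star_eq_adjoint T,
      ContinuousLinearMap.adjoint_inner_right]
    rfl
  calc ‖R (T x)‖ ^ 2 ≤ ‖R x‖ * ‖R ((W * T) x)‖ := by
        rw [norm_sq_eq_re_inner (𝕜 := 𝕜), key]; exact re_inner_le_norm _ _
    _ ≤ ‖R x‖ * (‖W * T‖ * ‖R x‖) := by
        gcongr; exact norm_apply_le_of_semiconjBy (semiconjBy_mul_of_mul_eq hW) x
    _ = ‖W * T‖ * ‖R x‖ ^ 2 := by ring

end IteratedCauchySchwarz

section SemiInnerProduct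

variable {𝕜 V F : Type*} [RCLike 𝕜] [AddCommGroup V] [Module 𝕜 V] [NormedAddCommGroup F]
  [InnerProductSpace 𝕜 F]

lemma norm_apply_inv_norm_smul {R : V →ₗ[𝕜] F} {v : V} (hv : R v ≠ 0) :
    ‖R ((‖R v‖⁻¹ : 𝕜) • v)‖ = 1 := by
  rw [map_smul, norm_smul_inv_norm hv]

lemma exists_norm_apply_eq_one_inner_eq_zero (R : V →ₗ[𝕜] F)
    (hR : 2 ≤ Module.rank 𝕜 (LinearMap.range R)) {u : V} (hu : ‖R u‖ = 1) :
    ∃ v, ‖R v‖ = 1 ∧ ⟪R u, R v⟫_𝕜 = 0 := by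
  obtain ⟨w, hw⟩ : ∃ w, R w ∉ 𝕜 ∙ R u := by
    by_contra! h
    have hle : LinearMap.range R ≤ 𝕜 ∙ R u := by rintro _ ⟨w, rfl⟩; exact h w
    have : Module.rank 𝕜 (LinearMap.range R) ≤ 1 :=
      (Submodule.rank_mono hle).trans (by simpa using rank_span_le (R := 𝕜) {R u})
    exact absurd (hR.trans this) (by norm_num)
  set v := w - ⟪R u, R w⟫_𝕜 • u
  have hv : R v = R w - ⟪R u, R w⟫_𝕜 • R u := by simp [v]
  have hv0 : R v ≠ 0 := fun h0 =>
    hw (Submodule.mem_span_singleton.mpr ⟨_, (sub_eq_zero.mp (hv ▸ h0)).symm⟩)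
  refine ⟨(‖R v‖⁻¹ : 𝕜) • v, norm_apply_inv_norm_smul hv0, ?_⟩
  rw [map_smul, inner_smul_right, hv, inner_sub_right, inner_smul_right,
    inner_self_eq_norm_sq_to_K, hu]
  simp

lemma norm_inner_le_mul_norm_sq_of_norm_eq_one {R : V →ₗ[𝕜] F} {T : V →ₗ[𝕜] V} {M : ℝ}
    (h : ∀ u, ‖R u‖ = 1 → ‖⟪R u, R (T u)⟫_𝕜‖ ≤ M) (u : V) :
    ‖⟪R u, R (T u)⟫_𝕜‖ ≤ M * ‖R u‖ ^ 2 := by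
  by_cases hu : R u = 0
  · simp [hu]
  have hr : 0 < ‖R u‖ := norm_pos_iff.mpr hu
  have := h _ (norm_apply_inv_norm_smul hu)
  simp only [map_smul, inner_smul_left, inner_smul_right, norm_mul, RCLike.norm_conj,
    norm_inv, RCLike.norm_ofReal, abs_norm] at this
  calc ‖⟪R u, R (T u)⟫_𝕜‖
      = ‖R u‖ ^ 2 * (‖R u‖⁻¹ * (‖R u‖⁻¹ * ‖⟪R u, R (T u)⟫_𝕜‖)) := by field_simp
    _ ≤ M * ‖R u‖ ^ 2 := by rw [mul_comm M]; gcongr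

end SemiInnerProduct

section Polarization

open Complex ComplexConjugate

variable {V F : Type*} [AddCommGroup V] [Module ℂ V] [NormedAddCommGroup F]
  [InnerProductSpace ℂ F] {R : V →ₗ[ℂ] F} {T : V →ₗ[ℂ] V} {M : ℝ}

lemma norm_inner_le_of_forall_norm_inner_self_le
    (h : ∀ u, ‖⟪R u, R (T u)⟫_ℂ‖ ≤ M * ‖R u‖ ^ 2) (x y : V) :
    ‖⟪R y, R (T x)⟫_ℂ‖ ≤ M * (‖R x‖ ^ 2 + ‖R y‖ ^ 2) := by
  let B (x y : V) : ℂ := ⟪R y, R (T x)⟫_ℂ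
  let D (c : ℂ) : ℂ := B (x + c • y) (x + c • y)
  have hD (c : ℂ) : D c = B x x + conj c * B x y + c * B y x + c * conj c * B y y := by
    simp only [D, B, map_add, map_smul, inner_add_left, inner_add_right, inner_smul_left,
      inner_smul_right]
    ring
  have hpol : 4 * B x y = D 1 - D (-1) + I * D I - I * D (-I) := by
    simp only [hD, map_one, map_neg, conj_I]
    linear_combination (2 * B x y - 2 * B y x) * I_mul_I
  have htri : 4 * ‖B x y‖ ≤ ‖D 1‖ + ‖D (-1)‖ + ‖D I‖ + ‖D (-I)‖ :=
    calc 4 * ‖B x y‖ = ‖D 1 - D (-1) + I * D I - I * D (-I)‖ := by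
          rw [← hpol, norm_mul, RCLike.norm_ofNat]
      _ ≤ ‖D 1‖ + ‖D (-1)‖ + ‖I * D I‖ + ‖I * D (-I)‖ := by
          grw [norm_sub_le, norm_add_le, norm_sub_le]
      _ = ‖D 1‖ + ‖D (-1)‖ + ‖D I‖ + ‖D (-I)‖ := by simp only [norm_mul, norm_I, one_mul]
  have hpar : ‖R (x + (1 : ℂ) • y)‖ ^ 2 + ‖R (x + (-1 : ℂ) • y)‖ ^ 2 + ‖R (x + I • y)‖ ^ 2
      + ‖R (x + (-I) • y)‖ ^ 2 = 4 * (‖R x‖ ^ 2 + ‖R y‖ ^ 2) := by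
    have h1 := parallelogram_law_with_norm ℂ (R x) (R y)
    have hI := parallelogram_law_with_norm ℂ (R x) (I • R y)
    rw [norm_smul, norm_I, one_mul] at hI
    simp only [map_add, map_smul]
    simp only [one_smul, neg_smul, ← sub_eq_add_neg]
    linarith
  have := h (x + (1 : ℂ) • y)
  have := h (x + (-1 : ℂ) • y)
  have := h (x + I • y)
  have := h (x + (-I) • y)
  simp only [D, B] at htri
  linarith [congrArg (M * ·) hpar]

lemma norm_apply_le_two_mul_of_forall_norm_inner_self_le (hM : 0 ≤ M)
    (h : ∀ u, ‖⟪R u, R (T u)⟫_ℂ‖ ≤ M * ‖R u‖ ^ 2) {x : V} (hx : ‖R x‖ ≤ 1) :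
    ‖R (T x)‖ ≤ 2 * M := by
  by_cases hTx : R (T x) = 0
  · simp [hTx, hM]
  obtain ⟨y, hy, hyx⟩ : ∃ y, ‖R y‖ = 1 ∧ ‖⟪R y, R (T x)⟫_ℂ‖ = ‖R (T x)‖ := by
    refine ⟨_, norm_apply_inv_norm_smul hTx, ?_⟩
    rw [map_smul, inner_smul_left, inner_self_eq_norm_sq_to_K]
    simp only [map_inv₀, RCLike.conj_ofReal, norm_mul, norm_inv, RCLike.norm_ofReal, abs_norm,
      norm_pow]
    field_simp
  calc ‖R (T x)‖ ≤ M * (‖R x‖ ^ 2 + ‖R y‖ ^ 2) :=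
        hyx ▸ norm_inner_le_of_forall_norm_inner_self_le h x y
    _ ≤ M * (1 + 1) := by rw [hy, one_pow]; gcongr; exact pow_le_one₀ (norm_nonneg _) hx
    _ = 2 * M := by ring

end Polarization

section NumericalRange

open ComplexConjugate

variable {E : Type*} [NormedAddCommGroup E] [InnerProductSpace ℂ E]

lemma opNormA_nonneg (A T : E →L[ℂ] E) : 0 ≤ opNormA A T :=
  Real.sSup_nonneg (by rintro _ ⟨x, -, rfl⟩; exact Real.sqrt_nonneg _)

lemma wqA_nonneg (A : E →L[ℂ] E) (q : ℂ) (T : E →L[ℂ] E) : 0 ≤ wqA A q T :=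
  Real.sSup_nonneg (by rintro _ ⟨z, -, rfl⟩; exact norm_nonneg z)

lemma semiNormA_apply_le_opNormA {A T : E →L[ℂ] E} (hT : ABounded A T) {x : E}
    (hx : semiNormA A x ≤ 1) : semiNormA A (T x) ≤ opNormA A T := by
  obtain ⟨c, hc, hTc⟩ := hT
  refine le_csSup ⟨c, ?_⟩ ⟨x, hx, rfl⟩
  rintro _ ⟨y, hy, rfl⟩
  exact (hTc y).trans (mul_le_of_le_one_right hc.le hy)

lemma opNormA_le {A T : E →L[ℂ] E} {M : ℝ} (hM : 0 ≤ M)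
    (h : ∀ x, semiNormA A x ≤ 1 → semiNormA A (T x) ≤ M) : opNormA A T ≤ M :=
  Real.sSup_le (by rintro _ ⟨x, hx, rfl⟩; exact h x hx) hM

variable [CompleteSpace E] {R T : E →L[ℂ] E} {q : ℂ}

lemma semiNormA_star_mul_self (R : E →L[ℂ] E) (x : E) : semiNormA (star R * R) x = ‖R x‖ := by
  rw [semiNormA, sipA, ← inner_apply_apply_eq_inner_star_mul_self, ← RCLike.re_to_complex,
    ← norm_sq_eq_re_inner, Real.sqrt_sq (norm_nonneg _)]

lemma sipA_star_mul_self (R : E →L[ℂ] E) (x y : E) : sipA (star R * R) x y = ⟪R y, R x⟫_ℂ :=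
  (inner_apply_apply_eq_inner_star_mul_self R y x).symm

lemma aBounded_of_mul_eq {W : E →L[ℂ] E} (hW : star R * R * W = star T * (star R * R)) :
    ABounded (star R * R) T := by
  refine ⟨√‖W * T‖ + 1, by positivity, fun x => ?_⟩
  rw [semiNormA_star_mul_self, semiNormA_star_mul_self]
  calc ‖R (T x)‖ ≤ √‖W * T‖ * ‖R x‖ := by
        refine (pow_le_pow_iff_left₀ (norm_nonneg _) (by positivity) two_ne_zero).mp ?_
        rw [mul_pow, Real.sq_sqrt (norm_nonneg _)]
        exact norm_apply_sq_le_of_mul_eq hW x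
    _ ≤ (√‖W * T‖ + 1) * ‖R x‖ := by gcongr; linarith

lemma norm_le_opNormA_of_mem_WqA (hT : ABounded (star R * R) T) {z : ℂ}
    (hz : z ∈ WqA (star R * R) q T) : ‖z‖ ≤ opNormA (star R * R) T := by
  obtain ⟨x, y, hx, hy, -, rfl⟩ := hz
  rw [semiNormA_star_mul_self] at hy
  calc ‖sipA (star R * R) (T x) y‖ ≤ ‖R y‖ * ‖R (T x)‖ := by
        rw [sipA_star_mul_self]; exact norm_inner_le_norm _ _
    _ = semiNormA (star R * R) (T x) := by rw [hy, one_mul, semiNormA_star_mul_self]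
    _ ≤ opNormA (star R * R) T := semiNormA_apply_le_opNormA hT hx.le

lemma wqA_le_opNormA (hT : ABounded (star R * R) T) :
    wqA (star R * R) q T ≤ opNormA (star R * R) T :=
  Real.sSup_le (by rintro _ ⟨z, hz, rfl⟩; exact norm_le_opNormA_of_mem_WqA hT hz)
    (opNormA_nonneg _ _)

lemma norm_le_wqA_of_mem_WqA (hT : ABounded (star R * R) T) {z : ℂ}
    (hz : z ∈ WqA (star R * R) q T) : ‖z‖ ≤ wqA (star R * R) q T :=
  le_csSup ⟨_, by rintro _ ⟨z, hz, rfl⟩; exact norm_le_opNormA_of_mem_WqA hT hz⟩ ⟨z, hz, rfl⟩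

lemma add_mem_WqA {u v : E} (hu : ‖R u‖ = 1) (hv : ‖R v‖ = 1) (huv : ⟪R u, R v⟫_ℂ = 0)
    {s : ℝ} (hs : ‖q‖ ^ 2 + s ^ 2 = 1) :
    q * ⟪R u, R (T u)⟫_ℂ + s * ⟪R v, R (T u)⟫_ℂ ∈ WqA (star R * R) q T := by
  have hRy : R (conj q • u + (s : ℂ) • v) = conj q • R u + (s : ℂ) • R v := by simp
  have hvu : ⟪R v, R u⟫_ℂ = 0 := by rw [← inner_conj_symm, huv, map_zero]
  refine ⟨u, conj q • u + (s : ℂ) • v, ?_, ?_, ?_, ?_⟩ <;>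
    simp only [semiNormA_star_mul_self, sipA_star_mul_self, hRy]
  · exact hu
  · have := norm_add_sq_eq_norm_sq_add_norm_sq_of_inner_eq_zero _ _
      (by rw [inner_smul_left, inner_smul_right, huv, mul_zero, mul_zero] :
        ⟪conj q • R u, (s : ℂ) • R v⟫_ℂ = 0)
    simp only [norm_smul, RCLike.norm_conj, Complex.norm_real, Real.norm_eq_abs, hu, hv] at this
    nlinarith [norm_nonneg (conj q • R u + (s : ℂ) • R v), abs_mul_abs_self s]
  · rw [inner_add_left, inner_smul_left, inner_smul_left, inner_self_eq_norm_sq_to_K, hu, hvu]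
    simp
  · rw [inner_add_left, inner_smul_left, inner_smul_left]
    simp

lemma norm_mul_norm_inner_le_wqA (hrank : 2 ≤ Module.rank ℂ (LinearMap.range R.toLinearMap))
    (hT : ABounded (star R * R) T) (hq : ‖q‖ ≤ 1) {u : E} (hu : ‖R u‖ = 1) :
    ‖q‖ * ‖⟪R u, R (T u)⟫_ℂ‖ ≤ wqA (star R * R) q T := by
  obtain ⟨v, hv, huv⟩ := exists_norm_apply_eq_one_inner_eq_zero R.toLinearMap hrank hu
  set s := √(1 - ‖q‖ ^ 2)
  have hs : ‖q‖ ^ 2 + s ^ 2 = 1 := by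
    rw [Real.sq_sqrt (by nlinarith [norm_nonneg q])]; ring
  set zPlus := q * ⟪R u, R (T u)⟫_ℂ + s * ⟪R v, R (T u)⟫_ℂ
  set zMinus := q * ⟪R u, R (T u)⟫_ℂ + ((-s : ℝ) : ℂ) * ⟪R v, R (T u)⟫_ℂ
  have hplus : ‖zPlus‖ ≤ wqA (star R * R) q T :=
    norm_le_wqA_of_mem_WqA hT (add_mem_WqA hu hv huv hs)
  have hminus : ‖zMinus‖ ≤ wqA (star R * R) q T :=
    norm_le_wqA_of_mem_WqA hT (add_mem_WqA hu hv huv (by rwa [neg_sq]))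
  have hsum : (2 : ℂ) * (q * ⟪R u, R (T u)⟫_ℂ) = zPlus + zMinus := by
    simp only [zPlus, zMinus]; push_cast; ring
  have := norm_add_le zPlus zMinus
  rw [← hsum, norm_mul, norm_mul, Complex.norm_two] at this
  linarith

lemma norm_mul_opNormA_le (hrank : 2 ≤ Module.rank ℂ (LinearMap.range R.toLinearMap))
    (hT : ABounded (star R * R) T) (hq : ‖q‖ ≤ 1) :
    ‖q‖ * opNormA (star R * R) T ≤ 2 * wqA (star R * R) q T := by
  rcases eq_or_ne q 0 with rfl | hq0
  · simpa using wqA_nonneg (star R * R) 0 T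
  have hq0 : 0 < ‖q‖ := norm_pos_iff.mpr hq0
  set M := wqA (star R * R) q T / ‖q‖
  have hM : 0 ≤ M := div_nonneg (wqA_nonneg _ _ _) hq0.le
  have hdiag : ∀ u, ‖⟪R u, R (T u)⟫_ℂ‖ ≤ M * ‖R u‖ ^ 2 :=
    norm_inner_le_mul_norm_sq_of_norm_eq_one (R := R.toLinearMap) (T := T.toLinearMap)
      fun u hu => (le_div_iff₀' hq0).mpr (norm_mul_norm_inner_le_wqA hrank hT hq hu)
  have hop : opNormA (star R * R) T ≤ 2 * M := opNormA_le (by positivity) fun x hx => by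
    rw [semiNormA_star_mul_self] at hx ⊢
    exact norm_apply_le_two_mul_of_forall_norm_inner_self_le (R := R.toLinearMap)
      (T := T.toLinearMap) hM hdiag hx
  calc ‖q‖ * opNormA (star R * R) T ≤ ‖q‖ * (2 * M) := by gcongr
    _ = 2 * wqA (star R * R) q T := by rw [mul_left_comm, mul_div_cancel₀ _ hq0.ne']

end NumericalRange

theorem stmt_10 (A : H →L[ℂ] H) (hA : A.IsPositive)
    (hrank : 2 ≤ Module.rank ℂ (LinearMap.range A.toLinearMap))
    (T : H →L[ℂ] H)
    (hadj : ∃ W : H →L[ℂ] H, A.comp W = (ContinuousLinearMap.adjoint T).comp A)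
    (q : ℂ) (hq : ‖q‖ ≤ 1) :
    ‖q‖ / 2 * opNormA A T ≤ wqA A q T ∧ wqA A q T ≤ opNormA A T := by
  obtain ⟨R, rfl⟩ := CStarAlgebra.nonneg_iff_eq_star_mul_self.mp
    ((ContinuousLinearMap.nonneg_iff_isPositive A).mpr hA)
  obtain ⟨W, hW⟩ := hadj
  have hT : ABounded (star R * R) T := aBounded_of_mul_eq hW
  have hrankR : 2 ≤ Module.rank ℂ (LinearMap.range R.toLinearMap) :=
    hrank.trans (LinearMap.rank_comp_le_right R.toLinearMap (star R).toLinearMap)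
  exact ⟨by linarith [norm_mul_opNormA_le hrankR hT hq], wqA_le_opNormA hT⟩
end
end

section
/- Let T be a bounded operator admitting an A-adjoint (there exists a bounded W with AW = T*A), with AT² = 0 and AT ≠ 0, and suppose the range of A is closed and has dimension at least 2. Then w_A(T) = ‖T‖_A / 2, where w_A(T) = sup{|⟨Tx,x⟩_A| : x ∈ H, ‖x‖_A = 1} and ‖T‖_A = sup{‖Tx‖_A : x ∈ H, ‖x‖_A ≤ 1}. -/
noncomputable section

open Filter

variable {H : Type*} [NormedAddCommGroup H] [InnerProductSpace ℂ H] [CompleteSpace H]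

/-!
Writing `A = S† S`, we get `⟨x, y⟩_A = ⟪S y, S x⟫` and `‖x‖_A = ‖S x‖`, and `A T² = 0` becomes
`S T² = 0`. Polarization of `(y, z) ↦ ⟪S y, S (T z)⟫` gives `‖T‖_A ≤ 2 w_A(T)`. Conversely, if
`‖S x‖ = 1`, `s = ‖S (T x)‖` and `g = ⟪S x, S (T x)⟫`, then `v = s² x - ḡ T x` satisfies
`S (T v) = s² S (T x)` because `S T² = 0`, while `S v` is `s²` times the component of `S x`
orthogonal to `S (T x)`, so `‖S v‖² = s² (s² - |g|²)`. Thus `s⁴ ≤ ‖T‖_A² (s² - |g|²)`, and AM-GM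
gives `|g| ≤ ‖T‖_A / 2`.
-/

open scoped InnerProductSpace

section SesquilinearNilpotent

variable {V E : Type*} [AddCommGroup V] [Module ℂ V] [NormedAddCommGroup E]
  [InnerProductSpace ℂ E] {S : V →ₗ[ℂ] E} {T : V →ₗ[ℂ] V}

variable (S) in
lemma norm_map_ofReal_smul (r : ℝ) (x : V) : ‖S ((r : ℂ) • x)‖ = |r| * ‖S x‖ := by
  rw [map_smul, norm_smul, Complex.norm_real, Real.norm_eq_abs]

lemma norm_map_inv_norm_smul {x : V} (hx : S x ≠ 0) : ‖S (((‖S x‖⁻¹ : ℝ) : ℂ) • x)‖ = 1 := by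
  rw [norm_map_ofReal_smul, abs_inv, abs_norm, inv_mul_cancel₀ (norm_ne_zero_iff.2 hx)]

lemma norm_map_comp_le_mul_of_forall_norm_le_one {N : ℝ}
    (hN : ∀ x, ‖S x‖ ≤ 1 → ‖S (T x)‖ ≤ N) (x : V) : ‖S (T x)‖ ≤ N * ‖S x‖ := by
  by_cases hx : S x = 0
  · -- every multiple of `x` lies in the unit ball of `S`
    have hN0 : 0 ≤ N := by simpa using hN 0 (by simp)
    by_contra! hlt
    rw [hx, norm_zero, mul_zero] at hlt
    have h := hN ((((N + 1) / ‖S (T x)‖ : ℝ) : ℂ) • x) (by simp [hx])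
    rw [map_smul, norm_map_ofReal_smul, abs_of_pos (by positivity),
      div_mul_cancel₀ _ hlt.ne'] at h
    linarith
  · have h := hN _ (norm_map_inv_norm_smul hx).le
    rw [map_smul, norm_map_ofReal_smul, abs_inv, abs_norm, inv_mul_le_iff₀ (by positivity)] at h
    linarith

lemma norm_inner_map_le_mul_sq_of_forall_norm_eq_one {L : ℝ}
    (hL : ∀ x, ‖S x‖ = 1 → ‖⟪S x, S (T x)⟫_ℂ‖ ≤ L) (x : V) :
    ‖⟪S x, S (T x)⟫_ℂ‖ ≤ L * ‖S x‖ ^ 2 := by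
  by_cases hx : S x = 0
  · simp [hx]
  · have h := hL _ (norm_map_inv_norm_smul hx)
    rw [map_smul, map_smul, map_smul, inner_smul_left, inner_smul_right, norm_mul, norm_mul,
      Complex.conj_ofReal, Complex.norm_real, Real.norm_eq_abs, abs_inv, abs_norm] at h
    have hpos : 0 < ‖S x‖ := norm_pos_iff.2 hx
    calc ‖⟪S x, S (T x)⟫_ℂ‖ = ‖S x‖ ^ 2 * (‖S x‖⁻¹ * (‖S x‖⁻¹ * ‖⟪S x, S (T x)⟫_ℂ‖)) := by
          field_simp
      _ ≤ L * ‖S x‖ ^ 2 := by nlinarith [mul_le_mul_of_nonneg_left h (sq_nonneg ‖S x‖)]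

variable (S T) in
lemma inner_map_comp_polarization (y z : V) :
    ⟪S (z + y), S (T (z + y))⟫_ℂ + Complex.I * ⟪S (z + Complex.I • y), S (T (z + Complex.I • y))⟫_ℂ
      - ⟪S (z - y), S (T (z - y))⟫_ℂ
      - Complex.I * ⟪S (z - Complex.I • y), S (T (z - Complex.I • y))⟫_ℂ
      = 4 * ⟪S y, S (T z)⟫_ℂ := by
  simp only [map_add, map_sub, map_smul, inner_add_left, inner_add_right, inner_sub_left,
    inner_sub_right, inner_smul_left, inner_smul_right, Complex.conj_I]
  linear_combination (2 * ⟪S z, S (T y)⟫_ℂ - 2 * ⟪S y, S (T z)⟫_ℂ) * Complex.I_sq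

lemma norm_inner_map_le_of_forall_le_mul_sq {L : ℝ}
    (hL : ∀ x, ‖⟪S x, S (T x)⟫_ℂ‖ ≤ L * ‖S x‖ ^ 2) (y z : V) :
    ‖⟪S y, S (T z)⟫_ℂ‖ ≤ L * (‖S y‖ ^ 2 + ‖S z‖ ^ 2) := by
  have hI : ‖Complex.I • S y‖ = ‖S y‖ := by rw [norm_smul, Complex.norm_I, one_mul]
  have hpar₁ := parallelogram_law_with_norm ℂ (S z) (S y)
  have hpar₂ := parallelogram_law_with_norm ℂ (S z) (Complex.I • S y)
  have htri : ‖4 * ⟪S y, S (T z)⟫_ℂ‖ ≤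
      ‖⟪S (z + y), S (T (z + y))⟫_ℂ‖ + ‖⟪S (z + Complex.I • y), S (T (z + Complex.I • y))⟫_ℂ‖
        + ‖⟪S (z - y), S (T (z - y))⟫_ℂ‖
        + ‖⟪S (z - Complex.I • y), S (T (z - Complex.I • y))⟫_ℂ‖ := by
    rw [← inner_map_comp_polarization]
    refine (norm_sub_le _ _).trans ?_
    rw [norm_mul _ ⟪S (z - Complex.I • y), _⟫_ℂ, Complex.norm_I, one_mul]
    gcongr
    refine (norm_sub_le _ _).trans ?_
    gcongr
    refine (norm_add_le _ _).trans ?_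
    rw [norm_mul, Complex.norm_I, one_mul]
  have h₁ := hL (z + y)
  have h₂ := hL (z + Complex.I • y)
  have h₃ := hL (z - y)
  have h₄ := hL (z - Complex.I • y)
  simp only [map_add, map_sub, map_smul] at htri h₁ h₂ h₃ h₄
  rw [norm_mul, show ‖(4 : ℂ)‖ = 4 by norm_num] at htri
  rw [hI] at hpar₂
  linarith [congrArg (L * ·) hpar₁, congrArg (L * ·) hpar₂]

lemma norm_map_comp_le_two_mul_of_forall_le_mul_sq {L : ℝ}
    (hL : ∀ x, ‖⟪S x, S (T x)⟫_ℂ‖ ≤ L * ‖S x‖ ^ 2) (hL0 : 0 ≤ L) {z : V} (hz : ‖S z‖ ≤ 1) :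
    ‖S (T z)‖ ≤ 2 * L := by
  by_cases hTz : S (T z) = 0
  · rw [hTz, norm_zero]
    positivity
  · set y := ((‖S (T z)‖⁻¹ : ℝ) : ℂ) • T z
    have hy : ⟪S y, S (T z)⟫_ℂ = ‖S (T z)‖ := by
      have hne : (‖S (T z)‖ : ℂ) ≠ 0 := by exact_mod_cast norm_ne_zero_iff.2 hTz
      rw [map_smul, inner_smul_left, inner_self_eq_norm_sq_to_K, Complex.conj_ofReal,
        RCLike.ofReal_eq_complex_ofReal]
      push_cast
      field_simp
    have h := norm_inner_map_le_of_forall_le_mul_sq hL y z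
    rw [hy, Complex.norm_real, Real.norm_of_nonneg (norm_nonneg _),
      norm_map_inv_norm_smul hTz] at h
    have hz2 : ‖S z‖ ^ 2 ≤ 1 := pow_le_one₀ (norm_nonneg _) hz
    nlinarith [mul_le_mul_of_nonneg_left hz2 hL0]

lemma norm_inner_map_le_half_of_comp_self_eq_zero (hT : ∀ x, S (T (T x)) = 0) {N : ℝ}
    (hN : ∀ x, ‖S (T x)‖ ≤ N * ‖S x‖) {x : V} (hx : ‖S x‖ = 1) :
    ‖⟪S x, S (T x)⟫_ℂ‖ ≤ N / 2 := by
  set s := ‖S (T x)‖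
  set g := ⟪S x, S (T x)⟫_ℂ
  have hgs : ‖g‖ ≤ s := by simpa [hx] using norm_inner_le_norm (S x) (S (T x))
  have hsN : s ≤ N := by simpa [hx] using hN x
  set v := ((s ^ 2 : ℝ) : ℂ) • x - (starRingEnd ℂ) g • T x
  have hSTv : ‖S (T v)‖ = s ^ 2 * s := by
    rw [map_sub, map_smul, map_smul, map_sub, map_smul, map_smul, hT, smul_zero, sub_zero,
      norm_smul, Complex.norm_real, Real.norm_of_nonneg (by positivity)]
  have hSv : ‖S v‖ ^ 2 = s ^ 2 * (s ^ 2 - ‖g‖ ^ 2) := by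
    have hg : g * (starRingEnd ℂ) g = (‖g‖ : ℂ) ^ 2 := Complex.mul_conj' g
    have hip : ⟪S v, S v⟫_ℂ = ((s ^ 2 * (s ^ 2 - ‖g‖ ^ 2) : ℝ) : ℂ) := by
      simp only [v, map_sub, map_smul, inner_sub_left, inner_sub_right, inner_smul_left,
        inner_smul_right, Complex.conj_ofReal, starRingEnd_self_apply,
        ← inner_conj_symm (S (T x)) (S x)]
      rw [inner_self_eq_norm_sq_to_K (S x), inner_self_eq_norm_sq_to_K (S (T x)), hx]
      push_cast
      linear_combination (-((s : ℂ) ^ 2)) * hg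
    rw [← inner_self_eq_norm_sq (𝕜 := ℂ), hip, RCLike.re_to_complex, Complex.ofReal_re]
  have hvN : (s ^ 2 * s) ^ 2 ≤ N ^ 2 * (s ^ 2 * (s ^ 2 - ‖g‖ ^ 2)) := by
    rw [← hSv, ← hSTv, ← mul_pow]
    exact pow_le_pow_left₀ (norm_nonneg _) (hN v) 2
  rcases (norm_nonneg (S (T x))).eq_or_lt with hs | hs
  · have hs0 : s = 0 := hs.symm
    linarith [norm_nonneg g]
  · have hs : 0 < s := hs
    have hN0 : 0 < N := hs.trans_le hsN
    have h : s ^ 4 ≤ N ^ 2 * (s ^ 2 - ‖g‖ ^ 2) := by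
      have hs2 : 0 < s ^ 2 := by positivity
      nlinarith
    have h2 : (N * ‖g‖) ^ 2 ≤ (N * (N / 2)) ^ 2 := by nlinarith [sq_nonneg (s ^ 2 - N ^ 2 / 2)]
    have h3 := (pow_le_pow_iff_left₀ (by positivity) (by positivity) two_ne_zero).1 h2
    exact le_of_mul_le_mul_left h3 hN0

theorem sSup_norm_inner_map_eq_half_sSup (hT : ∀ x, S (T (T x)) = 0) :
    sSup {r : ℝ | ∃ x, ‖S x‖ = 1 ∧ r = ‖⟪S x, S (T x)⟫_ℂ‖}
      = sSup ((fun x => ‖S (T x)‖) '' {x | ‖S x‖ ≤ 1}) / 2 := by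
  set Q := {r : ℝ | ∃ x, ‖S x‖ = 1 ∧ r = ‖⟪S x, S (T x)⟫_ℂ‖}
  set P := (fun x => ‖S (T x)‖) '' {x | ‖S x‖ ≤ 1}
  have hP0 : 0 ≤ sSup P := Real.sSup_nonneg (by rintro _ ⟨x, -, rfl⟩; exact norm_nonneg _)
  have hQ0 : 0 ≤ sSup Q := Real.sSup_nonneg (by rintro _ ⟨x, -, rfl⟩; exact norm_nonneg _)
  have hQP (hQ : BddAbove Q) : ∀ z, ‖S z‖ ≤ 1 → ‖S (T z)‖ ≤ 2 * sSup Q := fun z hz =>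
    norm_map_comp_le_two_mul_of_forall_le_mul_sq
      (norm_inner_map_le_mul_sq_of_forall_norm_eq_one fun x hx => le_csSup hQ ⟨x, hx, rfl⟩)
      hQ0 hz
  have hPQ (hP : BddAbove P) : ∀ x, ‖S x‖ = 1 → ‖⟪S x, S (T x)⟫_ℂ‖ ≤ sSup P / 2 :=
    fun x hx => norm_inner_map_le_half_of_comp_self_eq_zero hT
      (norm_map_comp_le_mul_of_forall_norm_le_one fun x hx => le_csSup hP ⟨x, hx, rfl⟩) hx
  by_cases hQ : BddAbove Q
  · have hP : BddAbove P := ⟨2 * sSup Q, by rintro _ ⟨z, hz, rfl⟩; exact hQP hQ z hz⟩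
    apply le_antisymm
    · exact Real.sSup_le (by rintro _ ⟨x, hx, rfl⟩; exact hPQ hP x hx) (by positivity)
    · have : sSup P ≤ 2 * sSup Q :=
        Real.sSup_le (by rintro _ ⟨z, hz, rfl⟩; exact hQP hQ z hz) (by positivity)
      linarith
  · -- `Real.sSup` of a set that is not bounded above is `0`
    have hP : ¬ BddAbove P := fun hP => hQ ⟨sSup P / 2, by rintro _ ⟨x, hx, rfl⟩; exact hPQ hP x hx⟩
    rw [Real.sSup_of_not_bddAbove hP, Real.sSup_of_not_bddAbove hQ, zero_div]

end SesquilinearNilpotent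

section Factorization

variable {A S : H →L[ℂ] H}

lemma ContinuousLinearMap.IsPositive.exists_eq_adjoint_comp_self (hA : A.IsPositive) :
    ∃ S : H →L[ℂ] H, A = ContinuousLinearMap.adjoint S ∘L S :=
  CStarAlgebra.nonneg_iff_eq_star_mul_self.1 ((ContinuousLinearMap.nonneg_iff_isPositive A).2 hA)

lemma sipA_eq_inner (hS : A = ContinuousLinearMap.adjoint S ∘L S) (x y : H) :
    sipA A x y = ⟪S y, S x⟫_ℂ := by
  rw [sipA, hS, ContinuousLinearMap.comp_apply, ContinuousLinearMap.adjoint_inner_right]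

lemma semiNormA_eq_norm (hS : A = ContinuousLinearMap.adjoint S ∘L S) (x : H) :
    semiNormA A x = ‖S x‖ := by
  rw [semiNormA, sipA_eq_inner hS, inner_self_eq_norm_sq_to_K]
  norm_cast
  exact Real.sqrt_sq (norm_nonneg _)

end Factorization

theorem stmt_17_general (A : H →L[ℂ] H) (hA : A.IsPositive)
    (T : H →L[ℂ] H)
    (hnil2 : A.comp (T ^ 2) = 0) :
    sSup {r : ℝ | ∃ x : H, semiNormA A x = 1 ∧ r = ‖sipA A (T x) x‖}
      = opNormA A T / 2 := by
  obtain ⟨S, hS⟩ := hA.exists_eq_adjoint_comp_self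
  have hT : ∀ x, S (T (T x)) = 0 := fun x => by
    rw [← norm_eq_zero, ← semiNormA_eq_norm hS, semiNormA, sipA,
      show A (T (T x)) = 0 from congr($hnil2 x), inner_zero_right, Complex.zero_re,
      Real.sqrt_zero]
  simp only [opNormA, semiNormA_eq_norm hS, sipA_eq_inner hS]
  exact sSup_norm_inner_map_eq_half_sSup (S := S.toLinearMap) (T := T.toLinearMap) hT

theorem stmt_17 (A : H →L[ℂ] H) (hA : A.IsPositive)
    (hrank : 2 ≤ Module.rank ℂ (LinearMap.range A.toLinearMap))
    (hclosed : IsClosed ((LinearMap.range A.toLinearMap : Submodule ℂ H) : Set H))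
    (T : H →L[ℂ] H)
    (hadj : ∃ W : H →L[ℂ] H, A.comp W = (ContinuousLinearMap.adjoint T).comp A)
    (hnil2 : A.comp (T ^ 2) = 0) (hnil1 : A.comp T ≠ 0) :
    sSup {r : ℝ | ∃ x : H, semiNormA A x = 1 ∧ r = ‖sipA A (T x) x‖}
      = opNormA A T / 2 :=
  stmt_17_general A hA T hnil2
end
end
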